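/- arXiv:2402.07019 — 2 statements merged into one kernel-verified Lean document; each statement's English description precedes it below -/
import Mathlib

section
/- (Meta-gradient lemma.) Let M be a finite discounted MDP, θ^L ∈ ℝ^{S×A} with π^L = π_{θ^L} the softmax policy, h ∈ ℕ, α > 0, and let φ ∈ ℝ^d ↦ R_φ be a reward parameterization with each map φ ↦ R_φ(s,a) differentiable. Define θ_new(φ) = θ^L + α Σ_{s,a} d^{π^L}(s) π^L(a|s) [∇_θ log π_θ(a|s)]_{θ = θ^L} · Q^{π^L}_{R_φ,h}(s,a) ∈ ℝ^{S×A}. Then for every (s,b) ∈ S×A and every coordinate j ∈ {1,…,d}, ∂θ_new(φ)(s,b)/∂φ_j = α · d^{π^L}(s) · π^L(b|s) · ∂A^{π^L}_{R_φ,h}(s,b)/∂φ_j. -/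
open scoped BigOperators

structure MDP (S A : Type*) [Fintype S] [Fintype A] where
  T : S → A → S → ℝ
  T_nonneg : ∀ s a s', 0 ≤ T s a s'
  T_sum_one : ∀ s a, ∑ s', T s a s' = 1
  P0 : S → ℝ
  P0_nonneg : ∀ s, 0 ≤ P0 s
  P0_sum_one : ∑ s, P0 s = 1
  disc : ℝ
  disc_nonneg : 0 ≤ disc
  disc_lt_one : disc < 1

variable {S A : Type*} [Fintype S] [Fintype A] [DecidableEq S] [DecidableEq A]

def IsPolicy (π : S → A → ℝ) : Prop :=
  (∀ s a, 0 ≤ π s a) ∧ ∀ s, ∑ a, π s a = 1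

def detPol (π : S → A) : S → A → ℝ := fun s a => if a = π s then 1 else 0

def stateDist (M : MDP S A) (π : S → A → ℝ) (s0 : S) : ℕ → S → ℝ
  | 0 => fun s => if s = s0 then 1 else 0
  | (t+1) => fun s' => ∑ s, ∑ a, stateDist M π s0 t s * π s a * M.T s a s'

noncomputable def Val (M : MDP S A) (π : S → A → ℝ) (R : S → A → ℝ) (s0 : S) : ℝ :=
  ∑' t : ℕ, M.disc ^ t * ∑ s, stateDist M π s0 t s * ∑ a, π s a * R s a

noncomputable def Qval (M : MDP S A) (π : S → A → ℝ) (R : S → A → ℝ) (s : S) (a : A) : ℝ :=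
  R s a + M.disc * ∑ s', M.T s a s' * Val M π R s'

noncomputable def Adv (M : MDP S A) (π : S → A → ℝ) (R : S → A → ℝ) (s : S) (a : A) : ℝ :=
  Qval M π R s a - Val M π R s

noncomputable def Vstar (M : MDP S A) (R : S → A → ℝ) (s : S) : ℝ :=
  sSup {v : ℝ | ∃ π, IsPolicy π ∧ Val M π R s = v}

def IsOptimal (M : MDP S A) (R : S → A → ℝ) (π : S → A → ℝ) : Prop :=
  ∀ s, Val M π R s = Vstar M R s

noncomputable def dOcc (M : MDP S A) (π : S → A → ℝ) (s0 : S) (s : S) : ℝ :=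
  (1 - M.disc) * ∑' t : ℕ, M.disc ^ t * stateDist M π s0 t s

noncomputable def dP0 (M : MDP S A) (π : S → A → ℝ) (s : S) : ℝ :=
  ∑ s0, M.P0 s0 * dOcc M π s0 s

noncomputable def Qh (M : MDP S A) (π : S → A → ℝ) (R : S → A → ℝ) : ℕ → S → A → ℝ
  | 0 => R
  | (h+1) => fun s a =>
      R s a + M.disc * ∑ s', M.T s a s' * ∑ a', π s' a' * Qh M π R h s' a'

noncomputable def Vh (M : MDP S A) (π : S → A → ℝ) (R : S → A → ℝ) (h : ℕ) (s : S) : ℝ :=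
  ∑ a, π s a * Qh M π R h s a

noncomputable def Advh (M : MDP S A) (π : S → A → ℝ) (R : S → A → ℝ) (h : ℕ) (s : S) (a : A) : ℝ :=
  Qh M π R h s a - Vh M π R h s

noncomputable def softmax (θ : EuclideanSpace ℝ (S × A)) (s : S) (a : A) : ℝ :=
  Real.exp (θ (s, a)) / ∑ b, Real.exp (θ (s, b))

noncomputable def gradLogSoftmax (θ : EuclideanSpace ℝ (S × A)) (s : S) (a : A) :
    EuclideanSpace ℝ (S × A) :=
  WithLp.toLp 2 (fun p => fderiv ℝ (fun θ' => Real.log (softmax θ' s a)) θ (EuclideanSpace.single p 1))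

/-- The depth-`h` informativeness criterion `I_h(R | R̄, π^T, π^L)`. -/
noncomputable def IhCrit (M : MDP S A) (Rbar : S → A → ℝ) (πT πL : S → A → ℝ)
    (h : ℕ) (R : S → A → ℝ) : ℝ :=
  ∑ s, ∑ a, dP0 M πL s * dP0 M πT s * (πL s a) ^ 2 *
    (Adv M πT Rbar s a - ∑ a', πL s a' * Adv M πT Rbar s a') *
    Advh M πL R h s a

/-- The depth-1 informativeness criterion `I₁(R | R̄, π^T, π^L)`. -/
noncomputable def I1 (M : MDP S A) (Rbar : S → A → ℝ) (πT πL : S → A → ℝ)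
    (R : S → A → ℝ) : ℝ :=
  ∑ s, ∑ a, dP0 M πL s * dP0 M πT s * (πL s a) ^ 2 *
    (Adv M πT Rbar s a - ∑ a', πL s a' * Adv M πT Rbar s a') *
    (R s a - ∑ b, πL s b * R s b)

/-- Uniform distribution over the argmax set of `f`. -/
noncomputable def argmaxUniform (f : A → ℝ) : A → ℝ := fun a =>
  if (∀ b, f b ≤ f a) then
    ((Finset.univ.filter fun a' : A => ∀ b, f b ≤ f a').card : ℝ)⁻¹
  else 0

/-- The updated policy parameter after one policy-gradient step with reward `R`. -/
noncomputable def thetaNew (M : MDP S A) (θL : EuclideanSpace ℝ (S × A)) (α : ℝ) (h : ℕ)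
    (R : S → A → ℝ) : EuclideanSpace ℝ (S × A) :=
  θL + α • ∑ s, ∑ a,
    (dP0 M (softmax θL) s * softmax θL s a * Qh M (softmax θL) R h s a) •
      gradLogSoftmax θL s a

/-- The surrogate performance `J(π_θ; R̄, π^T)`. -/
noncomputable def Jsur (M : MDP S A) (Rbar : S → A → ℝ) (πT : S → A → ℝ)
    (θ : EuclideanSpace ℝ (S × A)) : ℝ :=
  ∑ s, dP0 M πT s * ∑ a, softmax θ s a * Adv M πT Rbar s a


section Aux

variable {S A : Type*} [Fintype S] [Fintype A] [DecidableEq S] [DecidableEq A]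

lemma sumexp_pos (θ : EuclideanSpace ℝ (S × A)) (s : S) [Nonempty A] :
    0 < ∑ b, Real.exp (θ (s, b)) :=
  Finset.sum_pos (fun b _ => Real.exp_pos _) Finset.univ_nonempty

lemma gradLogSoftmax_apply [Nonempty A] (θ : EuclideanSpace ℝ (S × A)) (s : S) (a : A)
    (p : S × A) :
    gradLogSoftmax θ s a p =
      (if p = (s, a) then (1:ℝ) else 0) - (if p.1 = s then softmax θ s p.2 else 0) := by
  have hpos := sumexp_pos θ s
  have hlog : (fun θ' : EuclideanSpace ℝ (S × A) => Real.log (softmax θ' s a)) =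
      fun θ' => θ' (s, a) - Real.log (∑ b, Real.exp (θ' (s, b))) := by
    funext θ'
    have hpos' := sumexp_pos θ' s
    rw [softmax, Real.log_div (Real.exp_ne_zero _) (ne_of_gt hpos'), Real.log_exp]
  have h1 : HasFDerivAt (fun θ' : EuclideanSpace ℝ (S × A) => θ' (s, a))
      (EuclideanSpace.proj (s, a) : EuclideanSpace ℝ (S × A) →L[ℝ] ℝ) θ :=
    (EuclideanSpace.proj ((s, a) : S × A) :
      EuclideanSpace ℝ (S × A) →L[ℝ] ℝ).hasFDerivAt
  have h2 : HasFDerivAt (fun θ' : EuclideanSpace ℝ (S × A) => ∑ b, Real.exp (θ' (s, b)))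
      (∑ b, Real.exp (θ (s, b)) • (EuclideanSpace.proj (s, b) :
        EuclideanSpace ℝ (S × A) →L[ℝ] ℝ)) θ := by
    apply HasFDerivAt.fun_sum
    intro b _
    have hb : HasFDerivAt (fun θ' : EuclideanSpace ℝ (S × A) => θ' (s, b))
        (EuclideanSpace.proj (s, b) : EuclideanSpace ℝ (S × A) →L[ℝ] ℝ) θ :=
      (EuclideanSpace.proj ((s, b) : S × A) :
        EuclideanSpace ℝ (S × A) →L[ℝ] ℝ).hasFDerivAt
    exact (Real.hasDerivAt_exp (θ (s, b))).comp_hasFDerivAt θ hb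
  have h3 := h2.log (ne_of_gt hpos)
  have h4 := h1.fun_sub h3
  have hproj : ∀ (i : S × A) (v : EuclideanSpace ℝ (S × A)),
      (EuclideanSpace.proj i : EuclideanSpace ℝ (S × A) →L[ℝ] ℝ) v = v i := fun _ _ => rfl
  obtain ⟨p1, p2⟩ := p
  rw [gradLogSoftmax, hlog, h4.fderiv]
  simp only [WithLp.ofLp_toLp, ContinuousLinearMap.sub_apply, ContinuousLinearMap.smul_apply,
    ContinuousLinearMap.sum_apply, smul_eq_mul, hproj, EuclideanSpace.single_apply]
  by_cases hp : p1 = s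
  · subst hp
    simp only [Prod.mk.injEq, true_and, mul_ite, mul_one, mul_zero,
      Finset.sum_ite_eq', Finset.mem_univ, if_true]
    rw [softmax, div_eq_inv_mul]
    congr 1
    simp [eq_comm]
  · have hsp : s ≠ p1 := fun hq => hp hq.symm
    simp [Prod.ext_iff, hp, hsp]

lemma thetaNew_apply [Nonempty A] (M : MDP S A) (θL : EuclideanSpace ℝ (S × A)) (α : ℝ)
    (h : ℕ) (R : S → A → ℝ) (s : S) (b : A) :
    thetaNew M θL α h R (s, b) =
      θL (s, b) + α * dP0 M (softmax θL) s * softmax θL s b *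
        Advh M (softmax θL) R h s b := by
  have hsum : (∑ s', ∑ a,
      (dP0 M (softmax θL) s' * softmax θL s' a * Qh M (softmax θL) R h s' a) •
        gradLogSoftmax θL s' a) (s, b) =
      ∑ s', ∑ a, (dP0 M (softmax θL) s' * softmax θL s' a * Qh M (softmax θL) R h s' a) *
        gradLogSoftmax θL s' a (s, b) := by
    rw [WithLp.ofLp_sum, Finset.sum_apply]
    refine Finset.sum_congr rfl fun s' _ => ?_
    rw [WithLp.ofLp_sum, Finset.sum_apply]
    exact Finset.sum_congr rfl fun a _ => rfl
  rw [thetaNew, PiLp.add_apply, PiLp.smul_apply, smul_eq_mul, hsum]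
  congr 1
  rw [Finset.sum_eq_single s]
  · have : ∀ a, gradLogSoftmax θL s a (s, b) =
        (if b = a then (1:ℝ) else 0) - softmax θL s b := by
      intro a
      rw [gradLogSoftmax_apply]
      simp [Prod.ext_iff]
    simp only [this]
    rw [Finset.sum_congr rfl (fun a _ => mul_sub _ _ _), Finset.sum_sub_distrib]
    rw [Finset.sum_eq_single b (by intro a _ ha; simp [Ne.symm ha]) (by simp)]
    simp only [if_pos rfl, if_true, mul_one]
    have hV : ∑ a, dP0 M (softmax θL) s * softmax θL s a * Qh M (softmax θL) R h s a *
        softmax θL s b = dP0 M (softmax θL) s * softmax θL s b *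
          Vh M (softmax θL) R h s := by
      rw [Vh, Finset.mul_sum]
      refine Finset.sum_congr rfl fun a _ => ?_
      ring
    rw [hV, Advh]
    ring
  · intro s' _ hs'
    rw [Finset.sum_eq_zero]
    intro a _
    rw [gradLogSoftmax_apply]
    simp [Prod.ext_iff, Ne.symm hs'] -- careful direction
  · simp

lemma diff_Qh {d : ℕ} (M : MDP S A) (π : S → A → ℝ)
    (Rφ : EuclideanSpace ℝ (Fin d) → S → A → ℝ)
    (hRφ : ∀ s a, Differentiable ℝ (fun φ => Rφ φ s a)) :
    ∀ (h : ℕ) (s : S) (a : A), Differentiable ℝ (fun φ => Qh M π (Rφ φ) h s a) := by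
  intro h
  induction h with
  | zero => intro s a; exact hRφ s a
  | succ n ih =>
    intro s a
    simp only [Qh]
    refine (hRφ s a).add (Differentiable.const_mul ?_ _)
    refine Differentiable.fun_sum fun s' _ => Differentiable.const_mul ?_ _
    exact Differentiable.fun_sum fun a' _ => (ih s' a').const_mul _

lemma diff_Advh {d : ℕ} (M : MDP S A) (π : S → A → ℝ)
    (Rφ : EuclideanSpace ℝ (Fin d) → S → A → ℝ)
    (hRφ : ∀ s a, Differentiable ℝ (fun φ => Rφ φ s a)) (h : ℕ) (s : S) (a : A) :
    Differentiable ℝ (fun φ => Advh M π (Rφ φ) h s a) := by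
  simp only [Advh, Vh]
  exact (diff_Qh M π Rφ hRφ h s a).sub
    (Differentiable.fun_sum fun a' _ => (diff_Qh M π Rφ hRφ h s a').const_mul _)

end Aux

/-- **Meta-gradient lemma.** Each entry of the Jacobian of `θ_new` is
`α · d^{π^L}(s) · π^L(b|s) · ∂A^{π^L}_{R_φ,h}(s,b)/∂φ_j`. -/
theorem meta_gradient_lemma
    {d : ℕ} (M : MDP S A)
    (θL : EuclideanSpace ℝ (S × A)) (h : ℕ) (α : ℝ) (hα : 0 < α)
    (Rφ : EuclideanSpace ℝ (Fin d) → S → A → ℝ)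
    (hRφ : ∀ s a, Differentiable ℝ (fun φ => Rφ φ s a))
    (φ : EuclideanSpace ℝ (Fin d)) :
    ∀ (s : S) (b : A) (j : Fin d),
      fderiv ℝ (fun φ' => thetaNew M θL α h (Rφ φ') (s, b)) φ (EuclideanSpace.single j 1) =
        α * dP0 M (softmax θL) s * softmax θL s b *
          fderiv ℝ (fun φ' => Advh M (softmax θL) (Rφ φ') h s b) φ
            (EuclideanSpace.single j 1) := by
  intro s b j
  cases isEmpty_or_nonempty A
  · exact (IsEmpty.false b).elim
  have hfun : (fun φ' => thetaNew M θL α h (Rφ φ') (s, b)) =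
      fun φ' => θL (s, b) + (α * dP0 M (softmax θL) s * softmax θL s b) *
        Advh M (softmax θL) (Rφ φ') h s b := by
    funext φ'
    exact thetaNew_apply M θL α h (Rφ φ') s b
  rw [hfun, fderiv_const_add, fderiv_const_mul
    ((diff_Advh M (softmax θL) Rφ hRφ h s b) φ), ContinuousLinearMap.smul_apply,
    smul_eq_mul]
end

section
/- (Performance difference identity.) In a finite discounted MDP with reward function R, for any two policies π and π' and any start state s₀, V^{π'}_R(s₀) − V^π_R(s₀) = (1/(1−γ)) · Σ_s d^{π'}_{s₀}(s) · Σ_a π'(a|s) · A^π_R(s,a). -/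
open scoped BigOperators

variable {S A : Type*} [Fintype S] [Fintype A] [DecidableEq S] [DecidableEq A]

lemma stateDist_nonneg (M : MDP S A) (π : S → A → ℝ) (hπ : ∀ s a, 0 ≤ π s a)
    (s0 : S) : ∀ t s, 0 ≤ stateDist M π s0 t s
  | 0, s => by simp only [stateDist]; split <;> norm_num
  | (t+1), s' => Finset.sum_nonneg fun s _ => Finset.sum_nonneg fun a _ =>
      mul_nonneg (mul_nonneg (stateDist_nonneg M π hπ s0 t s) (hπ s a)) (M.T_nonneg s a s')

lemma stateDist_sum_one (M : MDP S A) (π : S → A → ℝ) (hπ : ∀ s, ∑ a, π s a = 1)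
    (s0 : S) : ∀ t, ∑ s, stateDist M π s0 t s = 1
  | 0 => by simp [stateDist]
  | (t+1) => by
      simp only [stateDist]
      rw [Finset.sum_comm]
      have h : ∀ s : S, ∑ s', ∑ a, stateDist M π s0 t s * π s a * M.T s a s'
          = stateDist M π s0 t s := by
        intro s
        rw [Finset.sum_comm]
        simp only [mul_assoc, ← Finset.mul_sum, M.T_sum_one, mul_one, hπ]
      rw [Finset.sum_congr rfl fun s _ => h s]
      exact stateDist_sum_one M π hπ s0 t

lemma stateDist_le_one (M : MDP S A) (π : S → A → ℝ) (hπ0 : ∀ s a, 0 ≤ π s a)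
    (hπ1 : ∀ s, ∑ a, π s a = 1) (s0 : S) (t : ℕ) (s : S) :
    stateDist M π s0 t s ≤ 1 := by
  rw [← stateDist_sum_one M π hπ1 s0 t]
  exact Finset.single_le_sum (fun i _ => stateDist_nonneg M π hπ0 s0 t i)
    (Finset.mem_univ s)

lemma summable_geo_bound (M : MDP S A) (x : ℕ → ℝ) (C : ℝ)
    (hx : ∀ t, |x t| ≤ C) : Summable (fun t => M.disc ^ t * x t) := by
  apply Summable.of_norm_bounded
    ((summable_geometric_of_lt_one M.disc_nonneg M.disc_lt_one).mul_left C)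
  intro t
  rw [norm_mul, norm_pow, Real.norm_eq_abs, Real.norm_eq_abs,
    abs_of_nonneg M.disc_nonneg, mul_comm]
  exact mul_le_mul_of_nonneg_right (hx t) (pow_nonneg M.disc_nonneg t)

/-- **Performance difference identity.** -/
theorem performance_difference_identity
    (M : MDP S A) (R : S → A → ℝ) (π π' : S → A → ℝ)
    (hπ : IsPolicy π) (hπ' : IsPolicy π') (s0 : S) :
    Val M π' R s0 - Val M π R s0 =
      (1 / (1 - M.disc)) * ∑ s, dOcc M π' s0 s * ∑ a, π' s a * Adv M π R s a := by
  obtain ⟨hp0, hp1⟩ := hπ'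
  have hd0 := stateDist_nonneg M π' hp0 s0
  have hd1 := stateDist_le_one M π' hp0 hp1 s0
  have hγ : (1 : ℝ) - M.disc ≠ 0 := sub_ne_zero.2 (ne_of_gt M.disc_lt_one)
  -- generic bound
  have habs : ∀ (w : S → ℝ), (∀ s, 0 ≤ w s) → (∀ s, w s ≤ 1) → ∀ (x : S → ℝ),
      |∑ s, w s * x s| ≤ ∑ s, |x s| := by
    intro w hw0 hw1 x
    calc |∑ s, w s * x s| ≤ ∑ s, |w s * x s| := Finset.abs_sum_le_sum_abs _ _
      _ ≤ ∑ s, |x s| := Finset.sum_le_sum fun s _ => by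
          rw [abs_mul, abs_of_nonneg (hw0 s)]
          exact mul_le_of_le_one_left (abs_nonneg _) (hw1 s)
  have hp1' : ∀ s a, π' s a ≤ 1 := fun s a => by
    rw [← hp1 s]
    exact Finset.single_le_sum (fun i _ => hp0 s i) (Finset.mem_univ a)
  -- abbreviations
  set V : S → ℝ := Val M π R with hV
  set d : ℕ → S → ℝ := stateDist M π' s0 with hd
  set r : ℕ → ℝ := fun t => M.disc ^ t * ∑ s, d t s * ∑ a, π' s a * R s a with hr
  set g : ℕ → ℝ := fun t => M.disc ^ t * ∑ s, d t s * V s with hg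
  -- summability
  have hrs : Summable r := by
    apply summable_geo_bound M _ (∑ s, ∑ a, |R s a|)
    intro t
    calc |∑ s, d t s * ∑ a, π' s a * R s a| ≤ ∑ s, |∑ a, π' s a * R s a| :=
          habs _ (hd0 t) (hd1 t) _
      _ ≤ ∑ s, ∑ a, |R s a| := Finset.sum_le_sum fun s _ => by
          calc |∑ a, π' s a * R s a| ≤ ∑ a, |π' s a * R s a| :=
                Finset.abs_sum_le_sum_abs _ _
            _ ≤ ∑ a, |R s a| := Finset.sum_le_sum fun a _ => by
                rw [abs_mul, abs_of_nonneg (hp0 s a)]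
                exact mul_le_of_le_one_left (abs_nonneg _) (hp1' s a)
  have hgs : Summable g := by
    apply summable_geo_bound M _ (∑ s, |V s|)
    intro t
    exact habs _ (hd0 t) (hd1 t) _
  have hgs' : Summable (fun t => g (t + 1)) := (summable_nat_add_iff 1).mpr hgs
  -- per-state summability
  have hstate : ∀ s : S, Summable (fun t => M.disc ^ t *
      (d t s * ∑ a, π' s a * Adv M π R s a)) := by
    intro s
    apply summable_geo_bound M _ |∑ a, π' s a * Adv M π R s a|
    intro t
    rw [abs_mul, abs_of_nonneg (hd0 t s)]
    exact mul_le_of_le_one_left (abs_nonneg _) (hd1 t s)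
  -- the shift identity
  have hshift : ∀ t : ℕ, ∑ s, d t s * ∑ a, π' s a * ∑ s', M.T s a s' * V s'
      = ∑ s', d (t+1) s' * V s' := by
    intro t
    have hrhs : ∑ s', d (t+1) s' * V s'
        = ∑ s', ∑ s, ∑ a, d t s * π' s a * M.T s a s' * V s' := by
      simp [hd, stateDist, Finset.sum_mul]
    rw [hrhs, Finset.sum_comm]
    refine Finset.sum_congr rfl fun s _ => ?_
    rw [Finset.sum_comm]
    simp [Finset.mul_sum, mul_assoc]
  -- the key per-step identity
  have key : ∀ t : ℕ, M.disc ^ t * ∑ s, d t s * ∑ a, π' s a * Adv M π R s a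
      = r t + g (t+1) - g t := by
    intro t
    have h1 : ∀ s : S, ∑ a, π' s a * Adv M π R s a
        = (∑ a, π' s a * R s a)
          + M.disc * (∑ a, π' s a * ∑ s', M.T s a s' * V s') - V s := by
      intro s
      simp only [Adv, Qval, ← hV, mul_sub, mul_add, Finset.sum_sub_distrib,
        Finset.sum_add_distrib, ← Finset.sum_mul, hp1 s, one_mul,
        mul_left_comm _ M.disc, ← Finset.mul_sum]
    have h2 : ∑ s, d t s * ∑ a, π' s a * Adv M π R s a
        = (∑ s, d t s * ∑ a, π' s a * R s a)
          + M.disc * (∑ s', d (t+1) s' * V s') - ∑ s, d t s * V s := by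
      rw [Finset.sum_congr rfl fun s _ => by rw [h1 s], ← hshift t]
      simp only [mul_sub, mul_add, Finset.sum_sub_distrib, Finset.sum_add_distrib,
        ← Finset.mul_sum, mul_left_comm _ M.disc]
    rw [h2, hr, hg]
    ring
  -- RHS rearrangement
  have hrhs : ∑ s, dOcc M π' s0 s * ∑ a, π' s a * Adv M π R s a
      = (1 - M.disc) * ∑' t : ℕ, M.disc ^ t *
          ∑ s, d t s * ∑ a, π' s a * Adv M π R s a := by
    simp only [dOcc, ← hd, mul_assoc]
    rw [← Finset.mul_sum]
    congr 1
    have hpt : ∀ s : S, (∑' t : ℕ, M.disc ^ t * d t s) * (∑ a, π' s a * Adv M π R s a)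
        = ∑' t : ℕ, M.disc ^ t * (d t s * ∑ a, π' s a * Adv M π R s a) := by
      intro s
      rw [← tsum_mul_right]
      exact tsum_congr fun t => by ring
    rw [Finset.sum_congr rfl fun s _ => hpt s, ← Summable.tsum_finsetSum (fun s _ => hstate s)]
    refine tsum_congr fun t => ?_
    rw [Finset.mul_sum]
  rw [hrhs, one_div, ← mul_assoc, inv_mul_cancel₀ hγ, one_mul]
  have hsum : ∑' t : ℕ, M.disc ^ t * ∑ s, d t s * ∑ a, π' s a * Adv M π R s a
      = ∑' t : ℕ, (r t + (g (t+1) - g t)) := by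
    refine tsum_congr fun t => ?_
    rw [key t]; ring
  rw [hsum, Summable.tsum_add hrs (hgs'.sub hgs), Summable.tsum_sub hgs' hgs]
  have hg0 : ∑' t, g (t + 1) = (∑' t, g t) - g 0 := by
    rw [Summable.tsum_eq_zero_add hgs]; ring
  have hVal' : Val M π' R s0 = ∑' t, r t := rfl
  have hValπ : g 0 = V s0 := by
    simp [hg, hd, stateDist, Finset.sum_ite_eq']
  rw [hg0, hVal', ← hValπ]
  ring
end
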